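/- Let m ≥ 0, n ≥ 0, let u ∈ lie_m and w ∈ ass_m, and let 1 ≤ i ≤ n and 1 ≤ j < k ≤ n. Then in edk_{m,n}: [u_i, w_{jk}] = 0 if i ∉ {j,k}; [u_k, w_{jk}] = (u·w)_{jk}; and [u_j, w_{jk}] = −(w·u)_{jk}, where u·w and w·u are products in ass_m. -/

import Mathlib

noncomputable section

open scoped TensorProduct

attribute [local instance 100] LieRing.ofAssociativeRing

/-- The free unital associative algebra over `ℚ` on `N` generators. -/
abbrev Ass (N : ℕ) : Type := FreeAlgebra ℚ (Fin N)

/-- The `i`-th generator `x_i`. -/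
def gen {N : ℕ} (i : Fin N) : Ass N := FreeAlgebra.ι ℚ i

/-- The monomial (word) associated to a list of generator indices. -/
def wordProd {N : ℕ} (l : List (Fin N)) : Ass N := (l.map gen).prod

/-- Extend a function on words (monomials) to a `ℚ`-linear map on the free algebra,
using the monomial basis. -/
def liftWord {N : ℕ} {A : Type} [AddCommGroup A] [Module ℚ A]
    (f : List (Fin N) → A) : Ass N →ₗ[ℚ] A :=
  (FreeAlgebra.basisFreeMonoid ℚ (Fin N)).constr ℚ fun w => f w.toList

/-- `μ_gr` on a word. -/
def muWord {N : ℕ} : List (Fin N) → Ass N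
  | [] => 0
  | [_] => 0
  | a :: b :: t => (if a = b then -(wordProd (a :: t)) else 0) + gen a * muWord (b :: t)

/-- The linearized self-intersection operation `μ_gr`. -/
def muGr (N : ℕ) : Ass N →ₗ[ℚ] Ass N := liftWord muWord

/-- The antipode: the anti-automorphism `ι` with `ι(x_i) = -x_i`, as a linear map. -/
def iotaMap (N : ℕ) : Ass N →ₗ[ℚ] Ass N :=
  liftWord fun l => ((-1 : ℚ) ^ l.length) • wordProd l.reverse

/-- The (right) partial derivative `∂_i`, characterized on `lie_N` by
`a = Σ_i (∂_i a) x_i`. -/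
def partialD {N : ℕ} (i : Fin N) : Ass N →ₗ[ℚ] Ass N :=
  liftWord fun l =>
    match l.getLast? with
    | some a => if a = i then wordProd l.dropLast else 0
    | none => 0

/-- `η_gr` on a pair of words. -/
def etaWord {N : ℕ} (l r : List (Fin N)) : Ass N :=
  match l.getLast?, r with
  | some a, b :: t => if a = b then -(wordProd (l.dropLast ++ a :: t)) else 0
  | _, _ => 0

/-- The linearized homotopy intersection form `η_gr`. -/
def etaGr (N : ℕ) : Ass N →ₗ[ℚ] Ass N →ₗ[ℚ] Ass N :=
  liftWord fun l => liftWord fun r => etaWord l r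

/-- Degree-`k` homogeneous part of a free algebra (word-length grading). -/
def homogS (X : Type) (k : ℕ) : Submodule ℚ (FreeAlgebra ℚ X) :=
  Submodule.span ℚ {z | ∃ l : List X, l.length = k ∧ z = (l.map (FreeAlgebra.ι ℚ)).prod}

/-- The projection onto the degree-`k` homogeneous component. -/
def homogComp {N : ℕ} (k : ℕ) : Ass N →ₗ[ℚ] Ass N :=
  liftWord fun l => if l.length = k then wordProd l else 0

/-- The free Lie algebra on `x_1, …, x_N`, as the Lie subalgebra of `Ass N`
(with the commutator bracket) generated by the generators. -/
def lieN (N : ℕ) : LieSubalgebra ℚ (Ass N) :=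
  LieSubalgebra.lieSpan ℚ (Ass N) (Set.range (gen (N := N)))

/-- The generator `x_i` as an element of `lie_N`. -/
def genL (N : ℕ) (i : Fin N) : lieN N :=
  ⟨gen i, LieSubalgebra.subset_lieSpan ⟨i, rfl⟩⟩

/-- Substitution: the algebra endomorphism of `ass_2` with `x ↦ p`, `y ↦ q`. -/
def sub2 (p q : Ass 2) : Ass 2 →ₐ[ℚ] Ass 2 := FreeAlgebra.lift ℚ ![p, q]

/-- `x`. -/
def xA : Ass 2 := gen 0
/-- `y`. -/
def yA : Ass 2 := gen 1

/-- Equation (E1): `φ(y,0) − φ(x+y,0) = 0`. -/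
def E1 (φ : Ass 2) : Prop := sub2 yA 0 φ - sub2 (xA + yA) 0 φ = 0

/-- Equation (E2): `(∂_y φ) + (∂_y φ)(y,0) − (∂_y φ)(x+y,0) − R(φ) = 0`,
where `R` is the restriction of `μ_gr` to `lie_2`. -/
def E2 (φ : Ass 2) : Prop :=
  partialD 1 φ + sub2 yA 0 (partialD 1 φ) - sub2 (xA + yA) 0 (partialD 1 φ) - muGr 2 φ = 0

/-- Equation (E3): `[x, φ(y,x)] + [y, φ(x,y)] = 0`. -/
def E3 (φ : Ass 2) : Prop := ⁅xA, sub2 yA xA φ⁆ + ⁅yA, φ⁆ = 0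

/-- `ν^em(φ) = (φ(y,x), φ(x,y))`. -/
def nuEm (φ : Ass 2) : Fin 2 → Ass 2 := ![sub2 yA xA φ, φ]

/-- The space `grt_1^em` of solutions to the linearized emergent equations. -/
def grt1em : Set (Ass 2) := {φ | φ ∈ lieN 2 ∧ E1 φ ∧ E2 φ ∧ E3 φ}

/-- The derivation `ρ(ũ)` on a word. -/
def rhoWord {N : ℕ} (u : Fin N → Ass N) : List (Fin N) → Ass N
  | [] => 0
  | a :: t => ⁅gen a, u a⁆ * wordProd t + gen a * rhoWord u t

/-- The tangential derivation `ρ(ũ)`, determined by `ρ(ũ)(x_i) = [x_i, u_i]`. -/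
def rho {N : ℕ} (u : Fin N → Ass N) : Ass N →ₗ[ℚ] Ass N := liftWord (rhoWord u)

/-- The span of commutators in `ass_N`. -/
def trRel (N : ℕ) : Submodule ℚ (Ass N) :=
  Submodule.span ℚ {z | ∃ a b : Ass N, z = a * b - b * a}

/-- The trace space `tr_N = ass_N/[ass_N, ass_N]`. -/
abbrev Tr (N : ℕ) : Type := Ass N ⧸ trRel N

/-- The projection `|·| : ass_N → tr_N`. -/
def trM (N : ℕ) : Ass N →ₗ[ℚ] Tr N := (trRel N).mkQ

/-- The divergence `div(ũ) = Σ_i |x_i (∂_i u_i)|`. -/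
def divergence {N : ℕ} (u : Fin N → Ass N) : Tr N :=
  ∑ i, trM N (gen i * partialD i (u i))

/-- `ũ ∈ tder_N`: all components lie in `lie_N`. -/
def IsTDer {N : ℕ} (u : Fin N → Ass N) : Prop := ∀ i, u i ∈ lieN N

/-- `ũ ∈ sder_N`. -/
def IsSDer {N : ℕ} (u : Fin N → Ass N) : Prop := IsTDer u ∧ rho u (∑ i, gen i) = 0

/-- `ũ ∈ krv_N`. -/
def IsKRV {N : ℕ} (u : Fin N → Ass N) : Prop :=
  IsSDer u ∧ ∃ f : Fin (N + 1) → Polynomial ℚ,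
    divergence u =
      trM N (Polynomial.aeval (∑ i, gen i) (f 0)) +
        ∑ i : Fin N, trM N (Polynomial.aeval (gen i) (f i.succ))

/-- `ũ ∈ krv_N^0`. -/
def IsKRV0 {N : ℕ} (u : Fin N → Ass N) : Prop :=
  IsSDer u ∧ ∃ cf : Fin N → ℚ, divergence u = ∑ i, cf i • trM N (gen i)

/-- The swap `u(x,y) ↦ u(y,x)`. -/
def swapA : Ass 2 →ₐ[ℚ] Ass 2 := sub2 yA xA

/-- `ũ ∈ krv_2^sym`. -/
def IsKRVsym (u : Fin 2 → Ass 2) : Prop := IsKRV u ∧ u 1 = swapA (u 0)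


/-- The coproduct `Δ` on `ass_N`, with `Δ(x_i) = x_i ⊗ 1 + 1 ⊗ x_i`. -/
def comulA (N : ℕ) : Ass N →ₐ[ℚ] (Ass N ⊗[ℚ] Ass N) :=
  FreeAlgebra.lift ℚ fun i => gen i ⊗ₜ[ℚ] (1 : Ass N) + (1 : Ass N) ⊗ₜ[ℚ] gen i

/-- `μ_{r,gr} = ((|·|∘mult) ⊗ id) ∘ (id ⊗ ((ι ⊗ id) ∘ Δ)) ∘ (id ⊗ μ_gr) ∘ Δ`. -/
def muR (N : ℕ) : Ass N →ₗ[ℚ] Tr N ⊗[ℚ] Ass N :=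
  (TensorProduct.map ((trM N).comp (LinearMap.mul' ℚ (Ass N))) LinearMap.id).comp <|
    ((TensorProduct.assoc ℚ (Ass N) (Ass N) (Ass N)).symm.toLinearMap).comp <|
      (TensorProduct.map LinearMap.id
          ((TensorProduct.map (iotaMap N) LinearMap.id).comp (comulA N).toLinearMap)).comp <|
        (TensorProduct.map LinearMap.id (muGr N)).comp (comulA N).toLinearMap

/-- `Alt(a ⊗ b) = a ⊗ b - b ⊗ a`. -/
def altMap (N : ℕ) : Tr N ⊗[ℚ] Tr N →ₗ[ℚ] Tr N ⊗[ℚ] Tr N :=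
  LinearMap.id - (TensorProduct.comm ℚ (Tr N) (Tr N)).toLinearMap

/-- The linearized Turaev cobracket `δ_gr = Alt ∘ (id ⊗ |·|) ∘ μ_{r,gr}`. -/
def Dgr (N : ℕ) : Ass N →ₗ[ℚ] Tr N ⊗[ℚ] Tr N :=
  (altMap N).comp ((TensorProduct.map LinearMap.id (trM N)).comp (muR N))

/-- Index type of the generators `t_{pq}` (`p ≠ q`) of the Drinfeld–Kohno Lie algebra. -/
def dkGenIdx (N : ℕ) : Type := {pq : Fin N × Fin N // pq.1 ≠ pq.2}

abbrev FLdk (N : ℕ) := FreeLieAlgebra ℚ (dkGenIdx N)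

def tFree {N : ℕ} (p q : Fin N) (h : p ≠ q) : FLdk N := FreeLieAlgebra.of ℚ ⟨(p, q), h⟩

/-- The defining relations of `dk_N`: symmetry, commutation and 4T. -/
def dkRels (N : ℕ) : Set (FLdk N) :=
  {z | ∃ (p q : Fin N) (h : p ≠ q), z = tFree p q h - tFree q p h.symm} ∪
  {z | ∃ (p q r s : Fin N) (hpq : p ≠ q) (hrs : r ≠ s),
      p ≠ r ∧ p ≠ s ∧ q ≠ r ∧ q ≠ s ∧ z = ⁅tFree p q hpq, tFree r s hrs⁆} ∪
  {z | ∃ (p q r : Fin N) (hpq : p ≠ q) (hqr : q ≠ r) (hpr : p ≠ r),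
      z = ⁅tFree p q hpq + tFree q r hqr, tFree p r hpr⁆}

def dkIdeal (N : ℕ) : LieIdeal ℚ (FLdk N) := LieSubmodule.lieSpan ℚ (FLdk N) (dkRels N)

/-- The Drinfeld–Kohno Lie algebra `dk_N`. -/
abbrev dk (N : ℕ) := FLdk N ⧸ dkIdeal N

/-- The generator `t_{pq}` of `dk_N`. -/
def tGen {N : ℕ} (p q : Fin N) (h : p ≠ q) : dk N :=
  LieSubmodule.Quotient.mk (N := dkIdeal N) (tFree p q h)

/-- Index type of the generators of the mixed Drinfeld–Kohno Lie algebra `dk_{m,n}`: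
pairs of distinct indices in `Fin (m+n)`, not both poles (i.e., not both `< m`). -/
def MIdx (m n : ℕ) : Type :=
  {pq : Fin (m + n) × Fin (m + n) // pq.1 ≠ pq.2 ∧ (m ≤ (pq.1 : ℕ) ∨ m ≤ (pq.2 : ℕ))}

abbrev FLmix (m n : ℕ) := FreeLieAlgebra ℚ (MIdx m n)

def tMix {m n : ℕ} (p q : Fin (m + n)) (h : p ≠ q)
    (hm : m ≤ (p : ℕ) ∨ m ≤ (q : ℕ)) : FLmix m n :=
  FreeLieAlgebra.of ℚ ⟨(p, q), h, hm⟩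

/-- The defining relations of `dk_{m,n}`: exactly the symmetry, commutation and 4T relations
of `dk_{m+n}` involving only mixed pairs. -/
def mixRels (m n : ℕ) : Set (FLmix m n) :=
  {z | ∃ (p q : Fin (m + n)) (h : p ≠ q) (hm : m ≤ (p : ℕ) ∨ m ≤ (q : ℕ)),
      z = tMix p q h hm - tMix q p h.symm hm.symm} ∪
  {z | ∃ (p q r s : Fin (m + n)) (hpq : p ≠ q) (hmpq : m ≤ (p : ℕ) ∨ m ≤ (q : ℕ))
      (hrs : r ≠ s) (hmrs : m ≤ (r : ℕ) ∨ m ≤ (s : ℕ)),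
      p ≠ r ∧ p ≠ s ∧ q ≠ r ∧ q ≠ s ∧ z = ⁅tMix p q hpq hmpq, tMix r s hrs hmrs⁆} ∪
  {z | ∃ (p q r : Fin (m + n)) (hpq : p ≠ q) (hmpq : m ≤ (p : ℕ) ∨ m ≤ (q : ℕ))
      (hqr : q ≠ r) (hmqr : m ≤ (q : ℕ) ∨ m ≤ (r : ℕ))
      (hpr : p ≠ r) (hmpr : m ≤ (p : ℕ) ∨ m ≤ (r : ℕ)),
      z = ⁅tMix p q hpq hmpq + tMix q r hqr hmqr, tMix p r hpr hmpr⁆}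

def mixIdeal (m n : ℕ) : LieIdeal ℚ (FLmix m n) :=
  LieSubmodule.lieSpan ℚ (FLmix m n) (mixRels m n)

/-- The mixed Drinfeld–Kohno Lie algebra `dk_{m,n}`. -/
abbrev dkmn (m n : ℕ) := FLmix m n ⧸ mixIdeal m n

lemma castAdd_ne_natAdd {m n : ℕ} (i : Fin m) (j : Fin n) :
    Fin.castAdd n i ≠ Fin.natAdd m j := by
  intro h
  have hv := congrArg Fin.val h
  simp only [Fin.coe_castAdd, Fin.coe_natAdd] at hv
  have := i.isLt
  omega

lemma natAdd_ne {m n : ℕ} {u v : Fin n} (h : u ≠ v) :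
    Fin.natAdd m u ≠ Fin.natAdd m v := by
  intro hh
  exact h (by
    have hv := congrArg Fin.val hh
    simp only [Fin.coe_natAdd] at hv
    exact Fin.ext (by omega))

lemma natAdd_le_left (m : ℕ) {n : ℕ} (j : Fin n) : m ≤ (Fin.natAdd m j : ℕ) := by
  simp only [Fin.coe_natAdd]; omega

/-- The generator `a_{ij}` of `dk_{m,n}` (0-indexed): `a_{ij} = t_{i(m+j)}`. -/
def aG {m n : ℕ} (i : Fin m) (j : Fin n) : dkmn m n :=
  LieSubmodule.Quotient.mk (N := mixIdeal m n)
    (tMix (Fin.castAdd n i) (Fin.natAdd m j) (castAdd_ne_natAdd i j)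
      (Or.inr (natAdd_le_left m j)))

/-- The generator `c_{ij}` of `dk_{m,n}` (0-indexed): `c_{ij} = t_{(m+i)(m+j)}`. -/
def cG {m n : ℕ} (u v : Fin n) (h : u ≠ v) : dkmn m n :=
  LieSubmodule.Quotient.mk (N := mixIdeal m n)
    (tMix (Fin.natAdd m u) (Fin.natAdd m v) (natAdd_ne h)
      (Or.inl (natAdd_le_left m u)))

/-- The Lie ideal `c` of `dk_{m,n}` generated by the `c_{ij}`. -/
def cId (m n : ℕ) : LieIdeal ℚ (dkmn m n) :=
  LieSubmodule.lieSpan ℚ (dkmn m n) {z | ∃ (u v : Fin n) (h : u ≠ v), z = cG u v h}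

/-- The Lie ideal `[c,c]`. -/
def ccId (m n : ℕ) : LieIdeal ℚ (dkmn m n) := ⁅cId m n, cId m n⁆

/-- The emergent Drinfeld–Kohno Lie algebra `edk_{m,n} = dk_{m,n}/[c,c]`. -/
abbrev edk (m n : ℕ) := dkmn m n ⧸ ccId m n

/-- Projection `dk_{m,n} → edk_{m,n}` as a function. -/
def eprojF (m n : ℕ) : dkmn m n → edk m n := LieSubmodule.Quotient.mk (N := ccId m n)

/-- Projection `dk_{m,n} → edk_{m,n}` as a `ℚ`-linear map. -/
def eproj (m n : ℕ) : dkmn m n →ₗ[ℚ] edk m n := (ccId m n).toSubmodule.mkQ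

/-- `a_{ij}` in `edk_{m,n}`. -/
def aGE {m n : ℕ} (i : Fin m) (j : Fin n) : edk m n := eprojF m n (aG i j)

/-- `c_{ij}` in `edk_{m,n}`. -/
def cGE {m n : ℕ} (u v : Fin n) (h : u ≠ v) : edk m n := eprojF m n (cG u v h)

/-- The canonical Lie algebra map `FreeLieAlgebra ℚ (Fin m) → ass_m`,
whose image is `lie_m`. -/
def toAssL (m : ℕ) : FreeLieAlgebra ℚ (Fin m) →ₗ⁅ℚ⁆ FreeAlgebra ℚ (Fin m) :=
  FreeLieAlgebra.lift ℚ (FreeAlgebra.ι ℚ)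

/-- `u ↦ u_i` (at `dk` level): the Lie algebra map with `x_p ↦ a_{pi}`. -/
def uEldk {m n : ℕ} (i : Fin n) : FreeLieAlgebra ℚ (Fin m) →ₗ⁅ℚ⁆ dkmn m n :=
  FreeLieAlgebra.lift ℚ fun p => aG p i

/-- `u ↦ u_i`: the Lie algebra map `lie_m → edk_{m,n}` with `x_p ↦ a_{pi}`. -/
def uEl {m n : ℕ} (i : Fin n) : FreeLieAlgebra ℚ (Fin m) →ₗ⁅ℚ⁆ edk m n :=
  FreeLieAlgebra.lift ℚ fun p => aGE p i

/-- Iterated bracketing `[a_{p₁ j}, [a_{p₂ j}, [… , [a_{p_d j}, ξ]…]]]`. -/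
def adWApply {m n : ℕ} (j : Fin n) : List (Fin m) → edk m n → edk m n
  | [], ξ => ξ
  | p :: t, ξ => ⁅aGE p j, adWApply j t ξ⁆


/-- `w ↦ w_{uv}`: the linear map `ass_m → edk_{m,n}` with
`1 ↦ c_{uv}` and `(x_{p₁}⋯x_{p_d}) ↦ [a_{p₁ v}, [… [a_{p_d v}, c_{uv}]…]]`. -/
def wEl {m n : ℕ} (u v : Fin n) (h : u ≠ v) : Ass m →ₗ[ℚ] edk m n :=
  liftWord fun l => adWApply v l (cGE u v h)

/-- `ad_w^{(l)}(ξ)`, linear in `w`. -/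
def adOp {m n : ℕ} (l : Fin n) (ξ : edk m n) : Ass m →ₗ[ℚ] edk m n :=
  liftWord fun lst => adWApply l lst ξ

/-- Degree-`k` part of the free Lie algebra (generators of degree 1), realized as the
preimage of the degree-`k` part of the free associative algebra under the canonical map. -/
def flHomog (X : Type) (k : ℕ) : Submodule ℚ (FreeLieAlgebra ℚ X) :=
  Submodule.comap
    (FreeLieAlgebra.lift ℚ (FreeAlgebra.ι ℚ (X := X)) :
      FreeLieAlgebra ℚ X →ₗ⁅ℚ⁆ FreeAlgebra ℚ X).toLinearMap
    (homogS X k)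

/-- Degree-`k` part of `edk_{m,n}`. -/
def edkHomog (m n : ℕ) (k : ℕ) : Submodule ℚ (edk m n) :=
  (((flHomog (MIdx m n) k).map (mixIdeal m n).toSubmodule.mkQ)).map (eproj m n)

-- Fin helper lemmas
lemma castSucc_ne_of_ne {n : ℕ} {u v : Fin n} (h : u ≠ v) :
    Fin.castSucc u ≠ Fin.castSucc v := fun hh => h (Fin.castSucc_injective n hh)

lemma succ_ne_of_ne {n : ℕ} {u v : Fin n} (h : u ≠ v) :
    Fin.succ u ≠ Fin.succ v := fun hh => h (Fin.succ_injective n hh)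

lemma castSucc_ne_last {n : ℕ} (u : Fin n) : Fin.castSucc u ≠ Fin.last n :=
  (Fin.castSucc_lt_last u).ne

lemma castSucc_ne_succ_of_le {n : ℕ} {u v : Fin n} (h : u ≤ v) :
    Fin.castSucc u ≠ Fin.succ v := by
  intro hh
  have hv := congrArg Fin.val hh
  simp only [Fin.coe_castSucc, Fin.val_succ] at hv
  have := Fin.le_def.mp h
  omega

/-- `D` is the pole coface map `δ_k : dk_{m,n} → dk_{m+1,n}`, `0 ≤ k ≤ m`
(1-indexed `k`; `k = 0` is extension on the left). -/
def IsDeltaPole (m n : ℕ) (k : ℕ) (D : dkmn m n →ₗ⁅ℚ⁆ dkmn (m + 1) n) : Prop :=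
  (∀ (i : Fin m) (j : Fin n),
     (((i : ℕ) + 1 < k) → D (aG i j) = aG (Fin.castSucc i) j) ∧
     (((i : ℕ) + 1 = k) → D (aG i j) = aG (Fin.castSucc i) j + aG (Fin.succ i) j) ∧
     ((k < (i : ℕ) + 1) → D (aG i j) = aG (Fin.succ i) j)) ∧
  (∀ (u v : Fin n) (h : u ≠ v), D (cG u v h) = cG u v h)

/-- `D` is the strand coface map `δ_{m+κ} : dk_{m,n} → dk_{m,n+1}`, `1 ≤ κ ≤ n+1`
(1-indexed strand `κ`; `κ = n+1` is extension on the right). -/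
def IsDeltaStrand (m n : ℕ) (κ : ℕ) (D : dkmn m n →ₗ⁅ℚ⁆ dkmn m (n + 1)) : Prop :=
  (∀ (i : Fin m) (j : Fin n),
     (((j : ℕ) + 1 < κ) → D (aG i j) = aG i (Fin.castSucc j)) ∧
     (((j : ℕ) + 1 = κ) → D (aG i j) = aG i (Fin.castSucc j) + aG i (Fin.succ j)) ∧
     ((κ < (j : ℕ) + 1) → D (aG i j) = aG i (Fin.succ j))) ∧
  (∀ (u v : Fin n) (h : u < v),
     (((v : ℕ) + 1 < κ) →
        D (cG u v h.ne) = cG (Fin.castSucc u) (Fin.castSucc v) (castSucc_ne_of_ne h.ne)) ∧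
     (((v : ℕ) + 1 = κ) →
        D (cG u v h.ne) = cG (Fin.castSucc u) (Fin.castSucc v) (castSucc_ne_of_ne h.ne)
          + cG (Fin.castSucc u) (Fin.succ v) (castSucc_ne_succ_of_le h.le)) ∧
     (((u : ℕ) + 1 < κ ∧ κ < (v : ℕ) + 1) →
        D (cG u v h.ne) = cG (Fin.castSucc u) (Fin.succ v) (castSucc_ne_succ_of_le h.le)) ∧
     (((u : ℕ) + 1 = κ) →
        D (cG u v h.ne) = cG (Fin.castSucc u) (Fin.succ v) (castSucc_ne_succ_of_le h.le)
          + cG (Fin.succ u) (Fin.succ v) (succ_ne_of_ne h.ne)) ∧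
     ((κ < (u : ℕ) + 1) →
        D (cG u v h.ne) = cG (Fin.succ u) (Fin.succ v) (succ_ne_of_ne h.ne)))

/-- `T` is `ϑ_{m+1} : dk_{m+1,n} → dk_{m,n+1}` (the last pole becomes the first strand). -/
def IsTheta (m n : ℕ) (T : dkmn (m + 1) n →ₗ⁅ℚ⁆ dkmn m (n + 1)) : Prop :=
  (∀ (i : Fin (m + 1)) (j : Fin n),
     (∀ hi : (i : ℕ) < m, T (aG i j) = aG ⟨i, hi⟩ (Fin.succ j)) ∧
     ((i : ℕ) = m → T (aG i j) = cG 0 (Fin.succ j) (Fin.succ_ne_zero j).symm)) ∧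
  (∀ (u v : Fin n) (h : u ≠ v), T (cG u v h) = cG (Fin.succ u) (Fin.succ v) (succ_ne_of_ne h))

/-- The coface map `d_k : dk_{m,n} → dk_{m,n+1}`, built from the data of the pole
cofaces, the strand cofaces, and `ϑ_{m+1}`. -/
def coface (m n : ℕ) (Dp : ℕ → (dkmn m n →ₗ⁅ℚ⁆ dkmn (m + 1) n))
    (Ds : ℕ → (dkmn m n →ₗ⁅ℚ⁆ dkmn m (n + 1)))
    (T : dkmn (m + 1) n →ₗ⁅ℚ⁆ dkmn m (n + 1)) (k : ℕ) :
    dkmn m n →ₗ⁅ℚ⁆ dkmn m (n + 1) :=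
  if k ≤ m then T.comp (Dp k) else Ds (k - m)

/-- The algebra map `ass_{m'+1} → ass_{m'}` with `x_p ↦ x_p` (`p < m'`) and `x_{m'} ↦ 0`. -/
def setLast0A (m' : ℕ) : Ass (m' + 1) →ₐ[ℚ] Ass m' :=
  FreeAlgebra.lift ℚ fun p : Fin (m' + 1) =>
    if h : (p : ℕ) < m' then gen ⟨p, h⟩ else 0

/-- The Lie algebra map `FreeLie (Fin (m'+1)) → FreeLie (Fin m')` setting the last
generator to `0`. -/
def flSetLast0 (m' : ℕ) : FreeLieAlgebra ℚ (Fin (m' + 1)) →ₗ⁅ℚ⁆ FreeLieAlgebra ℚ (Fin m') :=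
  FreeLieAlgebra.lift ℚ fun p : Fin (m' + 1) =>
    if h : (p : ℕ) < m' then FreeLieAlgebra.of ℚ ⟨p, h⟩ else 0

/-!
Both sides of each identity are linear in `w`, and `U ↦ [u_i, -]`, `U ↦ (u · -)` and
`U ↦ -(- · u)` are actions of the free Lie algebra, so it suffices to take `U = x_p` and `w` a
word. For `i = k` the identity is then the definition of `w_{jk}`. For `i ≠ k`, every
`[a_{pi}, a_{qk}]` lies in `c` (it vanishes for `p ≠ q` and equals `[a_{pk}, c_{ik}]` by 4T for
`p = q`), and `c` is abelian in `edk_{m,n}`; hence `ad a_{pi}` commutes with the iterated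
brackets by the `a_{qk}` and acts directly on `c_{jk}`. There it gives `0` if `i ∉ {j, k}`,
and `[a_{pj}, c_{jk}] = -[a_{pk}, c_{jk}]` by 4T if `i = j`.
-/

section Words

variable {N : ℕ}

lemma wordProd_cons (a : Fin N) (l : List (Fin N)) :
    wordProd (a :: l) = gen a * wordProd l := by
  simp [wordProd]

lemma wordProd_concat (l : List (Fin N)) (p : Fin N) :
    wordProd (l ++ [p]) = wordProd l * gen p := by
  simp [wordProd]

lemma basisFreeMonoid_apply_eq_wordProd (w : FreeMonoid (Fin N)) :
    FreeAlgebra.basisFreeMonoid ℚ (Fin N) w = wordProd w.toList := by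
  simp [FreeAlgebra.basisFreeMonoid, FreeAlgebra.equivMonoidAlgebraFreeMonoid, wordProd,
    FreeMonoid.lift_apply]
  rfl

variable {A : Type} [AddCommGroup A] [Module ℚ A]

lemma liftWord_wordProd (f : List (Fin N) → A) (l : List (Fin N)) :
    liftWord f (wordProd l) = f l := by
  simpa [liftWord, basisFreeMonoid_apply_eq_wordProd] using
    (FreeAlgebra.basisFreeMonoid ℚ (Fin N)).constr_basis ℚ (fun w => f w.toList)
      (FreeMonoid.ofList l)

lemma linearMap_ext_wordProd {f g : Ass N →ₗ[ℚ] A}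
    (h : ∀ l : List (Fin N), f (wordProd l) = g (wordProd l)) : f = g :=
  (FreeAlgebra.basisFreeMonoid ℚ (Fin N)).ext fun w => by
    simpa [basisFreeMonoid_apply_eq_wordProd] using h w.toList

end Words

section LieGeneral

variable {R X L M : Type*} [CommRing R] [LieRing L] [LieAlgebra R L]

namespace FreeLieAlgebra

lemma mem_of_forall_of_mem (S : LieSubalgebra R (FreeLieAlgebra R X))
    (h : ∀ x, of R x ∈ S) (U : FreeLieAlgebra R X) : U ∈ S := by
  let g : FreeLieAlgebra R X →ₗ⁅R⁆ S := lift R fun x => ⟨of R x, h x⟩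
  have hg : S.incl.comp g = LieHom.id := hom_ext fun x => by simp [g]
  have hU : S.incl (g U) = U := by simpa using DFunLike.congr_fun hg U
  exact hU ▸ (g U).2

variable [AddCommGroup M] [Module R M]

lemma lie_apply_eq_apply_of_forall_of (φ : FreeLieAlgebra R X →ₗ⁅R⁆ L)
    (T : FreeLieAlgebra R X →ₗ⁅R⁆ Module.End R M) (W : M →ₗ[R] L)
    (h : ∀ x v, ⁅φ (of R x), W v⁆ = W (T (of R x) v)) (U : FreeLieAlgebra R X) (v : M) :
    ⁅φ U, W v⁆ = W (T U v) := by
  let S : LieSubalgebra R (FreeLieAlgebra R X) :=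
    { carrier := {V | ∀ v, ⁅φ V, W v⁆ = W (T V v)}
      add_mem' := fun ha hb v => by simp [add_lie, ha v, hb v]
      zero_mem' := fun v => by simp
      smul_mem' := fun c a ha v => by simp [smul_lie, ha v]
      lie_mem' := fun {a b} (ha : ∀ v, _) (hb : ∀ v, _) v => by
        simp only [LieHom.map_lie, lie_lie, ha, hb, Ring.lie_def, LinearMap.sub_apply,
          Module.End.mul_apply, map_sub] }
  exact mem_of_forall_of_mem S (fun x => h x) U v

end FreeLieAlgebra

def LieIdeal.quotientMk (I : LieIdeal R L) : L →ₗ⁅R⁆ L ⧸ I :=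
  { (LieSubmodule.Quotient.mk' I : L →ₗ[R] L ⧸ I) with
    map_lie' := fun {x y} => LieSubmodule.Quotient.mk_bracket I x y }

lemma LieIdeal.quotientMk_surjective (I : LieIdeal R L) :
    Function.Surjective I.quotientMk :=
  fun y => LieSubmodule.Quotient.surjective_mk' I y

lemma LieIdeal.ker_quotientMk (I : LieIdeal R L) : I.quotientMk.ker = I := by
  ext x
  exact LieSubmodule.Quotient.mk_eq_zero' (N := I)

lemma LieIdeal.lie_eq_zero_of_mem_map_quotientMk {I : LieIdeal R L} {x y : L ⧸ ⁅I, I⁆}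
    (hx : x ∈ I.map (⁅I, I⁆ : LieIdeal R L).quotientMk)
    (hy : y ∈ I.map (⁅I, I⁆ : LieIdeal R L).quotientMk) : ⁅x, y⁆ = 0 := by
  have h := LieSubmodule.lie_mem_lie hx hy
  rwa [← LieIdeal.map_bracket_eq _ (LieIdeal.quotientMk_surjective _),
    LieIdeal.map_eq_bot_iff.mpr (LieIdeal.ker_quotientMk _).ge, LieSubmodule.mem_bot] at h

/-- A Lie algebra morphism because right multiplication reverses products. -/
def negMulRightLieHom (R A : Type*) [CommRing R] [Ring A] [Algebra R A] :
    A →ₗ⁅R⁆ Module.End R A where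
  toFun a := -LinearMap.mulRight R a
  map_add' a b := by ext; simp [mul_add]; abel
  map_smul' c a := by ext; simp
  map_lie' {a b} := by ext; simp [Ring.lie_def, mul_sub, mul_assoc]

@[simp]
lemma negMulRightLieHom_apply (R A : Type*) [CommRing R] [Ring A] [Algebra R A] (a x : A) :
    negMulRightLieHom R A a x = -(x * a) :=
  rfl

end LieGeneral

section MixedDK

variable {m n : ℕ}

def edkMk (m n : ℕ) : FLmix m n →ₗ⁅ℚ⁆ edk m n :=
  (ccId m n).quotientMk.comp (mixIdeal m n).quotientMk

lemma edkMk_eq_zero_of_mem_mixRels {z : FLmix m n} (hz : z ∈ mixRels m n) : edkMk m n z = 0 := by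
  simp only [edkMk, LieHom.comp_apply]
  rw [show (mixIdeal m n).quotientMk z = 0 from
    (LieSubmodule.Quotient.mk_eq_zero' (N := mixIdeal m n)).mpr (LieSubmodule.subset_lieSpan hz),
    map_zero]

lemma aGE_eq_edkMk (p : Fin m) (i : Fin n) :
    aGE p i = edkMk m n (tMix (Fin.castAdd n p) (Fin.natAdd m i) (castAdd_ne_natAdd p i)
      (Or.inr (natAdd_le_left m i))) := rfl

lemma cGE_eq_edkMk (u v : Fin n) (h : u ≠ v) :
    cGE u v h = edkMk m n (tMix (Fin.natAdd m u) (Fin.natAdd m v) (natAdd_ne h)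
      (Or.inl (natAdd_le_left m u))) := rfl

lemma lie_aGE_aGE_of_ne {p q : Fin m} {i l : Fin n} (hpq : p ≠ q) (hil : i ≠ l) :
    ⁅(aGE p i : edk m n), aGE q l⁆ = 0 := by
  rw [aGE_eq_edkMk, aGE_eq_edkMk, ← LieHom.map_lie]
  exact edkMk_eq_zero_of_mem_mixRels <| Or.inl <| Or.inr ⟨_, _, _, _, _, _, _, _,
    (Fin.castAdd_injective m n).ne hpq, castAdd_ne_natAdd p l, (castAdd_ne_natAdd q i).symm,
    natAdd_ne hil, rfl⟩

lemma lie_aGE_cGE_of_ne {p : Fin m} {i u v : Fin n} (h : u ≠ v) (hiu : i ≠ u) (hiv : i ≠ v) :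
    ⁅aGE p i, (cGE u v h : edk m n)⁆ = 0 := by
  rw [aGE_eq_edkMk, cGE_eq_edkMk, ← LieHom.map_lie]
  exact edkMk_eq_zero_of_mem_mixRels <| Or.inl <| Or.inr ⟨_, _, _, _, _, _, _, _,
    castAdd_ne_natAdd p u, castAdd_ne_natAdd p v, natAdd_ne hiu, natAdd_ne hiv, rfl⟩

/-- The 4T relation for the triple `(p, m+u, m+v)`. -/
lemma lie_aGE_aGE_add_lie_cGE_aGE (p : Fin m) {u v : Fin n} (h : u ≠ v) :
    ⁅aGE p u, aGE p v⁆ + ⁅(cGE u v h : edk m n), aGE p v⁆ = 0 := by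
  rw [aGE_eq_edkMk, aGE_eq_edkMk, cGE_eq_edkMk, ← LieHom.map_lie, ← LieHom.map_lie, ← map_add,
    ← add_lie]
  exact edkMk_eq_zero_of_mem_mixRels <| Or.inr ⟨_, _, _, _, _, _, _, _, _, rfl⟩

/-- The 4T relation for the triple `(m+u, p, m+v)`, combined with `t_{(m+u)p} = t_{p(m+u)}`. -/
lemma lie_aGE_cGE_add_lie_aGE_cGE (p : Fin m) {u v : Fin n} (h : u ≠ v) :
    ⁅aGE p u, (cGE u v h : edk m n)⁆ + ⁅aGE p v, (cGE u v h : edk m n)⁆ = 0 := by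
  have hsymm : edkMk m n (tMix (Fin.natAdd m u) (Fin.castAdd n p) (castAdd_ne_natAdd p u).symm
      (Or.inl (natAdd_le_left m u))) = aGE p u := by
    rw [aGE_eq_edkMk, ← sub_eq_zero, ← map_sub]
    exact edkMk_eq_zero_of_mem_mixRels <| Or.inl <| Or.inl ⟨_, _, _, _, rfl⟩
  rw [← hsymm, aGE_eq_edkMk, cGE_eq_edkMk, ← LieHom.map_lie, ← LieHom.map_lie, ← map_add,
    ← add_lie]
  exact edkMk_eq_zero_of_mem_mixRels <| Or.inr ⟨_, _, _, _, _, _, _, _, _, rfl⟩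

def cIdE (m n : ℕ) : LieIdeal ℚ (edk m n) := (cId m n).map (ccId m n).quotientMk

lemma cGE_mem_cIdE (u v : Fin n) (h : u ≠ v) : (cGE u v h : edk m n) ∈ cIdE m n :=
  LieIdeal.mem_map (LieSubmodule.subset_lieSpan ⟨u, v, h, rfl⟩)

lemma lie_eq_zero_of_mem_cIdE {x y : edk m n} (hx : x ∈ cIdE m n) (hy : y ∈ cIdE m n) :
    ⁅x, y⁆ = 0 :=
  LieIdeal.lie_eq_zero_of_mem_map_quotientMk hx hy

lemma lie_aGE_aGE_mem_cIdE {i k : Fin n} (hik : i ≠ k) (p q : Fin m) :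
    ⁅aGE p i, aGE q k⁆ ∈ cIdE m n := by
  obtain rfl | hpq := eq_or_ne p q
  · rw [eq_neg_of_add_eq_zero_left (lie_aGE_aGE_add_lie_cGE_aGE p hik)]
    exact neg_mem (lie_mem_left ℚ _ _ _ _ (cGE_mem_cIdE i k hik))
  · rw [lie_aGE_aGE_of_ne hpq hik]
    exact zero_mem _

lemma adWApply_mem_cIdE (k : Fin n) (l : List (Fin m)) {ξ : edk m n} (hξ : ξ ∈ cIdE m n) :
    adWApply k l ξ ∈ cIdE m n := by
  induction l with
  | nil => exact hξ
  | cons q t ih => exact LieSubmodule.lie_mem _ ih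

lemma adWApply_zero (k : Fin n) (l : List (Fin m)) : adWApply k l (0 : edk m n) = 0 := by
  induction l <;> simp [adWApply, *]

lemma adWApply_neg (k : Fin n) (l : List (Fin m)) (ξ : edk m n) :
    adWApply k l (-ξ) = -adWApply k l ξ := by
  induction l <;> simp [adWApply, *]

lemma adWApply_concat (k : Fin n) (l : List (Fin m)) (p : Fin m) (ξ : edk m n) :
    adWApply k (l ++ [p]) ξ = adWApply k l ⁅aGE p k, ξ⁆ := by
  induction l <;> simp [adWApply, *]

lemma lie_adWApply_of_lie_aGE_mem {k : Fin n} {x : edk m n}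
    (hx : ∀ q, ⁅x, aGE q k⁆ ∈ cIdE m n) (l : List (Fin m)) {ξ : edk m n}
    (hξ : ξ ∈ cIdE m n) : ⁅x, adWApply k l ξ⁆ = adWApply k l ⁅x, ξ⁆ := by
  induction l with
  | nil => rfl
  | cons q t ih =>
    change ⁅x, ⁅aGE q k, adWApply k t ξ⁆⁆ = ⁅aGE q k, adWApply k t ⁅x, ξ⁆⁆
    -- by Leibniz; the extra term `⁅⁅x, a_{qk}⁆, _⁆` is a bracket inside the abelian ideal `c`
    rw [leibniz_lie, lie_eq_zero_of_mem_cIdE (hx q) (adWApply_mem_cIdE k t hξ), zero_add, ih]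

lemma wEl_wordProd {j k : Fin n} (h : j ≠ k) (l : List (Fin m)) :
    wEl j k h (wordProd l) = adWApply k l (cGE j k h) :=
  liftWord_wordProd _ l

variable {j k : Fin n} (hjk : j ≠ k)
include hjk

lemma lie_aGE_wEl_of_ne {i : Fin n} (hij : i ≠ j) (hik : i ≠ k) (p : Fin m) (w : Ass m) :
    ⁅aGE p i, wEl j k hjk w⁆ = 0 := by
  suffices LieAlgebra.ad ℚ (edk m n) (aGE p i) ∘ₗ wEl j k hjk = 0 from
    LinearMap.congr_fun this w
  refine linearMap_ext_wordProd fun l => ?_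
  rw [LinearMap.comp_apply, LieAlgebra.ad_apply, wEl_wordProd,
    lie_adWApply_of_lie_aGE_mem (lie_aGE_aGE_mem_cIdE hik p) l (cGE_mem_cIdE j k hjk),
    lie_aGE_cGE_of_ne hjk hij hik, adWApply_zero, LinearMap.zero_apply]

lemma lie_aGE_wEl_right (p : Fin m) (w : Ass m) :
    ⁅aGE p k, wEl j k hjk w⁆ = wEl j k hjk (gen p * w) := by
  suffices LieAlgebra.ad ℚ (edk m n) (aGE p k) ∘ₗ wEl j k hjk
      = wEl j k hjk ∘ₗ LinearMap.mulLeft ℚ (gen p) from LinearMap.congr_fun this w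
  refine linearMap_ext_wordProd fun l => ?_
  rw [LinearMap.comp_apply, LinearMap.comp_apply, LinearMap.mulLeft_apply, ← wordProd_cons,
    wEl_wordProd, wEl_wordProd]
  rfl

lemma lie_aGE_wEl_left (p : Fin m) (w : Ass m) :
    ⁅aGE p j, wEl j k hjk w⁆ = -wEl j k hjk (w * gen p) := by
  suffices LieAlgebra.ad ℚ (edk m n) (aGE p j) ∘ₗ wEl j k hjk
      = -(wEl j k hjk ∘ₗ LinearMap.mulRight ℚ (gen p)) from LinearMap.congr_fun this w
  refine linearMap_ext_wordProd fun l => ?_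
  rw [LinearMap.comp_apply, LieAlgebra.ad_apply, LinearMap.neg_apply, LinearMap.comp_apply,
    LinearMap.mulRight_apply, ← wordProd_concat, wEl_wordProd, wEl_wordProd, adWApply_concat,
    lie_adWApply_of_lie_aGE_mem (lie_aGE_aGE_mem_cIdE hjk p) l (cGE_mem_cIdE j k hjk),
    eq_neg_of_add_eq_zero_left (lie_aGE_cGE_add_lie_aGE_cGE p hjk), adWApply_neg]

end MixedDK

lemma uEl_of {m n : ℕ} (i : Fin n) (p : Fin m) : uEl i (FreeLieAlgebra.of ℚ p) = aGE p i :=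
  FreeLieAlgebra.lift_of_apply _ _

lemma toAssL_of (m : ℕ) (p : Fin m) : toAssL m (FreeLieAlgebra.of ℚ p) = gen p :=
  FreeLieAlgebra.lift_of_apply _ _

/-- brackets `[u_i, w_{jk}]` in `edk_{m,n}`. -/
theorem statement8 (m n : ℕ) (U : FreeLieAlgebra ℚ (Fin m)) (u : Ass m)
    (hU : toAssL m U = u) (w : Ass m) (i j k : Fin n) (hjk : j < k) :
    (i ≠ j → i ≠ k → ⁅uEl i U, wEl j k hjk.ne w⁆ = 0) ∧
    ⁅uEl k U, wEl j k hjk.ne w⁆ = wEl j k hjk.ne (u * w) ∧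
    ⁅uEl j U, wEl j k hjk.ne w⁆ = -(wEl j k hjk.ne (w * u)) := by
  subst hU
  refine ⟨fun hij hik => ?_, ?_, ?_⟩
  · simpa using FreeLieAlgebra.lie_apply_eq_apply_of_forall_of (uEl i) 0 (wEl j k hjk.ne)
      (fun p v => by simpa [uEl_of] using lie_aGE_wEl_of_ne hjk.ne hij hik p v) U w
  · simpa using FreeLieAlgebra.lie_apply_eq_apply_of_forall_of (uEl k)
      ((Algebra.lmul ℚ (Ass m)).toLieHom.comp (toAssL m)) (wEl j k hjk.ne)
      (fun p v => by simpa [uEl_of, toAssL_of] using lie_aGE_wEl_right hjk.ne p v) U w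
  · simpa using FreeLieAlgebra.lie_apply_eq_apply_of_forall_of (uEl j)
      ((negMulRightLieHom ℚ (Ass m)).comp (toAssL m)) (wEl j k hjk.ne)
      (fun p v => by simpa [uEl_of, toAssL_of] using
        lie_aGE_wEl_left hjk.ne p v) U w
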